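/- For α, β ∈ F*, the algebras B_{6,1}^α and B_{6,1}^β are isomorphic if and only if there exists λ ∈ F* with β = λ²α. -/
import Mathlib


/-- The bracket of the 6-dimensional algebra `B_{6,1}^α`: nonzero products
`[e₁,e₂]=e₄`, `[e₁,e₃]=e₅`, `[e₂,e₃]=αe₆`, `[e₄,e₅]=e₆` (0-indexed coordinates). -/
def b61 {F : Type*} [Field F] (α : F) (x y : Fin 6 → F) : Fin 6 → F :=
  ![0, 0, 0, x 0 * y 1 - x 1 * y 0, x 0 * y 2 - x 2 * y 0,
    α * (x 1 * y 2 - x 2 * y 1) + (x 3 * y 4 - x 4 * y 3)]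

section aux
variable {F : Type*} [Field F]

@[simp] theorem b61c0 (α : F) (x y : Fin 6 → F) : b61 α x y 0 = 0 := rfl
@[simp] theorem b61c1 (α : F) (x y : Fin 6 → F) : b61 α x y 1 = 0 := rfl
@[simp] theorem b61c2 (α : F) (x y : Fin 6 → F) : b61 α x y 2 = 0 := rfl
@[simp] theorem b61c3 (α : F) (x y : Fin 6 → F) : b61 α x y 3 = x 0 * y 1 - x 1 * y 0 := rfl
@[simp] theorem b61c4 (α : F) (x y : Fin 6 → F) : b61 α x y 4 = x 0 * y 2 - x 2 * y 0 := rfl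
@[simp] theorem b61c5 (α : F) (x y : Fin 6 → F) :
    b61 α x y 5 = α * (x 1 * y 2 - x 2 * y 1) + (x 3 * y 4 - x 4 * y 3) := rfl

variable {G : Type*}
@[simp] theorem v6_0 (a0 a1 a2 a3 a4 a5 : G) : ![a0,a1,a2,a3,a4,a5] 0 = a0 := rfl
@[simp] theorem v6_1 (a0 a1 a2 a3 a4 a5 : G) : ![a0,a1,a2,a3,a4,a5] 1 = a1 := rfl
@[simp] theorem v6_2 (a0 a1 a2 a3 a4 a5 : G) : ![a0,a1,a2,a3,a4,a5] 2 = a2 := rfl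
@[simp] theorem v6_3 (a0 a1 a2 a3 a4 a5 : G) : ![a0,a1,a2,a3,a4,a5] 3 = a3 := rfl
@[simp] theorem v6_4 (a0 a1 a2 a3 a4 a5 : G) : ![a0,a1,a2,a3,a4,a5] 4 = a4 := rfl
@[simp] theorem v6_5 (a0 a1 a2 a3 a4 a5 : G) : ![a0,a1,a2,a3,a4,a5] 5 = a5 := rfl

/-- diagonal linear equivalence -/
def diagMap (d : Fin 6 → F) (hd : ∀ i, d i ≠ 0) : (Fin 6 → F) ≃ₗ[F] (Fin 6 → F) where
  toFun x := fun i => d i * x i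
  invFun x := fun i => (d i)⁻¹ * x i
  map_add' x y := by funext i; simp [mul_add]
  map_smul' cst x := by funext i; simp; ring
  left_inv x := by
    funext i; simp only []; rw [inv_mul_eq_div, mul_div_cancel_left₀ _ (hd i)]
  right_inv x := by
    funext i; simp only []; rw [mul_inv_cancel_left₀ (hd i)]

@[simp] theorem diagMap_apply (d : Fin 6 → F) (hd : ∀ i, d i ≠ 0) (x : Fin 6 → F) (i : Fin 6) :
    diagMap d hd x i = d i * x i := rfl

theorem easy_dir (α β : F) (l : F) (hl : l ≠ 0) (hβ : β = l ^ 2 * α) :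
    ∃ φ : (Fin 6 → F) ≃ₗ[F] (Fin 6 → F),
        ∀ x y : Fin 6 → F, φ (b61 α x y) = b61 β (φ x) (φ y) := by
  refine ⟨diagMap ![l,1,1,l,l,l^2] ?_, ?_⟩
  · intro i; fin_cases i <;> simp [hl]
  · intro x y
    funext i
    fin_cases i <;> simp [hβ] <;> ring
theorem hard_dir (α β : F) (hα : α ≠ 0) (hβ : β ≠ 0)
    (φ : (Fin 6 → F) ≃ₗ[F] (Fin 6 → F))
    (hφ : ∀ x y : Fin 6 → F, φ (b61 α x y) = b61 β (φ x) (φ y)) :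
    ∃ l : F, l ≠ 0 ∧ β = l ^ 2 * α := by
  have hsymm : ∀ z, φ (φ.symm z) = z := φ.apply_symm_apply
  -- Step 1: every vector with first three coords zero is φ of such a vector
  have hD : ∀ z : Fin 6 → F, z 0 = 0 → z 1 = 0 → z 2 = 0 →
      ∃ x : Fin 6 → F, x 0 = 0 ∧ x 1 = 0 ∧ x 2 = 0 ∧ φ x = z := by
    intro z h0 h1 h2
    refine ⟨b61 α (φ.symm ![1,0,0,z 5,0,0]) (φ.symm ![0, z 3, z 4,0,1,0]),
      rfl, rfl, rfl, ?_⟩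
    rw [hφ, hsymm, hsymm]
    funext i
    fin_cases i <;> simp <;>
      first | exact h0.symm | exact h1.symm | exact h2.symm
  -- Step 2: the center is spanned by e6
  have hv5z : ∀ z : Fin 6 → F, b61 β (φ ![0,0,0,0,0,1]) z = 0 := by
    intro z
    have h := hφ ![0,0,0,0,0,1] (φ.symm z)
    rw [hsymm] at h
    rw [← h]
    have : b61 α ![0,0,0,0,0,(1:F)] (φ.symm z) = 0 := by
      funext i; fin_cases i <;> simp
    rw [this, map_zero]
  have h5_1 : φ ![0,0,0,0,0,(1:F)] 1 = 0 := by
    have := congrFun (hv5z ![1,0,0,0,0,0]) 3; simpa using this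
  have h5_2 : φ ![0,0,0,0,0,(1:F)] 2 = 0 := by
    have := congrFun (hv5z ![1,0,0,0,0,0]) 4; simpa using this
  have h5_0 : φ ![0,0,0,0,0,(1:F)] 0 = 0 := by
    have := congrFun (hv5z ![0,1,0,0,0,0]) 3; simpa using this
  have h5_3 : φ ![0,0,0,0,0,(1:F)] 3 = 0 := by
    have := congrFun (hv5z ![0,0,0,0,1,0]) 5; simpa [h5_1, h5_2] using this
  have h5_4 : φ ![0,0,0,0,0,(1:F)] 4 = 0 := by
    have := congrFun (hv5z ![0,0,0,1,0,0]) 5; simpa [h5_1, h5_2] using this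
  set c : F := φ ![0,0,0,0,0,(1:F)] 5 with hcdef
  have hc : c ≠ 0 := by
    intro h
    have hz : φ ![0,0,0,0,0,(1:F)] = 0 := by
      funext i; fin_cases i
      exacts [h5_0, h5_1, h5_2, h5_3, h5_4, h]
    have : (![0,0,0,0,0,(1:F)] : Fin 6 → F) = 0 := by
      apply φ.injective; rw [hz, map_zero]
    have := congrFun this 5
    simp at this
  -- criterion for being a multiple of e6
  have hC5 : ∀ x : Fin 6 → F, (∀ i : Fin 6, i ≠ 5 → φ x i = 0) →
      x 1 = 0 ∧ x 2 = 0 := by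
    intro x hx
    have key : φ x = φ ((φ x 5 / c) • ![0,0,0,0,0,1]) := by
      rw [map_smul]
      funext i
      fin_cases i
      · show φ x 0 = φ x 5 / c * φ ![0,0,0,0,0,1] 0
        rw [h5_0, mul_zero, hx 0 (by decide)]
      · show φ x 1 = φ x 5 / c * φ ![0,0,0,0,0,1] 1
        rw [h5_1, mul_zero, hx 1 (by decide)]
      · show φ x 2 = φ x 5 / c * φ ![0,0,0,0,0,1] 2
        rw [h5_2, mul_zero, hx 2 (by decide)]
      · show φ x 3 = φ x 5 / c * φ ![0,0,0,0,0,1] 3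
        rw [h5_3, mul_zero, hx 3 (by decide)]
      · show φ x 4 = φ x 5 / c * φ ![0,0,0,0,0,1] 4
        rw [h5_4, mul_zero, hx 4 (by decide)]
      · show φ x 5 = φ x 5 / c * φ ![0,0,0,0,0,1] 5
        rw [← hcdef, div_mul_cancel₀ _ hc]
    have hx' := φ.injective key
    constructor
    · have := congrFun hx' 1; simpa using this
    · have := congrFun hx' 2; simpa using this
  -- Step 3: centralizer of the derived algebra
  have hcent : ∀ x : Fin 6 → F,
      (∀ y : Fin 6 → F, y 0 = 0 → y 1 = 0 → y 2 = 0 → b61 α x y = 0) →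
      φ x 3 = 0 ∧ φ x 4 = 0 := by
    intro x hx
    obtain ⟨y4, hy0, hy1, hy2, hy4⟩ := hD ![0,0,0,0,1,0] rfl rfl rfl
    obtain ⟨y3, hz0, hz1, hz2, hy3⟩ := hD ![0,0,0,1,0,0] rfl rfl rfl
    have e4eq : b61 β (φ x) ![0,0,0,0,1,0] = 0 := by
      rw [← hy4, ← hφ, hx y4 hy0 hy1 hy2, map_zero]
    have e3eq : b61 β (φ x) ![0,0,0,1,0,0] = 0 := by
      rw [← hy3, ← hφ, hx y3 hz0 hz1 hz2, map_zero]
    constructor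
    · have := congrFun e4eq 5; simpa using this
    · have := congrFun e3eq 5
      simpa using this
  have hv0c : φ ![(1:F),0,0,0,0,0] 3 = 0 ∧ φ ![(1:F),0,0,0,0,0] 4 = 0 := by
    apply hcent; intro y h0 h1 h2; funext i; fin_cases i <;> simp [h0, h1, h2]
  have hv1c : φ ![0,(1:F),0,0,0,0] 3 = 0 ∧ φ ![0,(1:F),0,0,0,0] 4 = 0 := by
    apply hcent; intro y h0 h1 h2; funext i; fin_cases i <;> simp [h0, h1, h2]
  have hv2c : φ ![0,0,(1:F),0,0,0] 3 = 0 ∧ φ ![0,0,(1:F),0,0,0] 4 = 0 := by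
    apply hcent; intro y h0 h1 h2; funext i; fin_cases i <;> simp [h0, h1, h2]
  -- Step 4: bracket relations on basis vectors
  have hb01 : φ ![0,0,0,(1:F),0,0]
      = b61 β (φ ![1,0,0,0,0,0]) (φ ![0,1,0,0,0,0]) := by
    rw [← hφ]; congr 1; funext i; fin_cases i <;> simp
  have hb02 : φ ![0,0,0,0,(1:F),0]
      = b61 β (φ ![1,0,0,0,0,0]) (φ ![0,0,1,0,0,0]) := by
    rw [← hφ]; congr 1; funext i; fin_cases i <;> simp
  have hb12 : α • φ ![0,0,0,0,0,(1:F)]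
      = b61 β (φ ![0,1,0,0,0,0]) (φ ![0,0,1,0,0,0]) := by
    rw [← map_smul, ← hφ]; congr 1; funext i; fin_cases i <;> simp
  have hb34 : φ ![0,0,0,0,0,(1:F)]
      = b61 β (φ ![0,0,0,(1:F),0,0]) (φ ![0,0,0,0,(1:F),0]) := by
    rw [← hφ]; congr 1; funext i; fin_cases i <;> simp
  -- scalar equations
  have E1 : (0:F) = φ ![0,(1:F),0,0,0,0] 0 * φ ![0,0,(1:F),0,0,0] 1
      - φ ![0,(1:F),0,0,0,0] 1 * φ ![0,0,(1:F),0,0,0] 0 := by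
    have h := congrFun hb12 3
    rwa [b61c3, Pi.smul_apply, h5_3, smul_zero] at h
  have E2 : (0:F) = φ ![0,(1:F),0,0,0,0] 0 * φ ![0,0,(1:F),0,0,0] 2
      - φ ![0,(1:F),0,0,0,0] 2 * φ ![0,0,(1:F),0,0,0] 0 := by
    have h := congrFun hb12 4
    rwa [b61c4, Pi.smul_apply, h5_4, smul_zero] at h
  have E3 : α * c = β * (φ ![0,(1:F),0,0,0,0] 1 * φ ![0,0,(1:F),0,0,0] 2
      - φ ![0,(1:F),0,0,0,0] 2 * φ ![0,0,(1:F),0,0,0] 1)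
      + (φ ![0,(1:F),0,0,0,0] 3 * φ ![0,0,(1:F),0,0,0] 4
      - φ ![0,(1:F),0,0,0,0] 4 * φ ![0,0,(1:F),0,0,0] 3) := by
    have h := congrFun hb12 5
    rwa [b61c5, Pi.smul_apply, ← hcdef, smul_eq_mul] at h
  have E4 := congrFun hb34 5
  rw [b61c5, hb01, hb02] at E4
  simp only [b61c1, b61c2, b61c3, b61c4] at E4
  rw [← hcdef] at E4
  rw [hv1c.1, hv1c.2, hv2c.1, hv2c.2] at E3
  -- Step 5: the (0,1) and (0,2) matrix entries vanish
  have h10 : φ ![0,(1:F),0,0,0,0] 0 = 0 := by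
    by_contra hne
    have hx : ∀ i : Fin 6, i ≠ 5 →
        φ (![0,0,(1:F),0,0,0] - (φ ![0,0,(1:F),0,0,0] 0 / φ ![0,(1:F),0,0,0,0] 0)
          • ![0,(1:F),0,0,0,0]) i = 0 := by
      intro i hi
      rw [map_sub, map_smul, Pi.sub_apply, Pi.smul_apply, smul_eq_mul]
      fin_cases i
      · show φ ![0,0,(1:F),0,0,0] 0
          - φ ![0,0,(1:F),0,0,0] 0 / φ ![0,(1:F),0,0,0,0] 0 * φ ![0,(1:F),0,0,0,0] 0 = 0
        rw [div_mul_cancel₀ _ hne, sub_self]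
      · show φ ![0,0,(1:F),0,0,0] 1
          - φ ![0,0,(1:F),0,0,0] 0 / φ ![0,(1:F),0,0,0,0] 0 * φ ![0,(1:F),0,0,0,0] 1 = 0
        field_simp
        first
          | linear_combination E1
          | linear_combination -E1
      · show φ ![0,0,(1:F),0,0,0] 2
          - φ ![0,0,(1:F),0,0,0] 0 / φ ![0,(1:F),0,0,0,0] 0 * φ ![0,(1:F),0,0,0,0] 2 = 0
        field_simp
        first
          | linear_combination E2
          | linear_combination -E2
      · show φ ![0,0,(1:F),0,0,0] 3
          - φ ![0,0,(1:F),0,0,0] 0 / φ ![0,(1:F),0,0,0,0] 0 * φ ![0,(1:F),0,0,0,0] 3 = 0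
        rw [hv1c.1, hv2c.1, mul_zero, sub_zero]
      · show φ ![0,0,(1:F),0,0,0] 4
          - φ ![0,0,(1:F),0,0,0] 0 / φ ![0,(1:F),0,0,0,0] 0 * φ ![0,(1:F),0,0,0,0] 4 = 0
        rw [hv1c.2, hv2c.2, mul_zero, sub_zero]
      · exact absurd rfl hi
    have h2' := (hC5 _ hx).2
    rw [Pi.sub_apply, Pi.smul_apply, smul_eq_mul] at h2'
    simp at h2'
  have h20 : φ ![0,0,(1:F),0,0,0] 0 = 0 := by
    by_contra hne
    have hv11 : φ ![0,(1:F),0,0,0,0] 1 = 0 := by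
      have hz : φ ![0,(1:F),0,0,0,0] 1 * φ ![0,0,(1:F),0,0,0] 0 = 0 := by
        linear_combination E1 + (φ ![0,0,(1:F),0,0,0] 1) * h10
      exact (mul_eq_zero.mp hz).resolve_right hne
    have hv12 : φ ![0,(1:F),0,0,0,0] 2 = 0 := by
      have hz : φ ![0,(1:F),0,0,0,0] 2 * φ ![0,0,(1:F),0,0,0] 0 = 0 := by
        linear_combination E2 + (φ ![0,0,(1:F),0,0,0] 2) * h10
      exact (mul_eq_zero.mp hz).resolve_right hne
    have hx : ∀ i : Fin 6, i ≠ 5 → φ ![0,(1:F),0,0,0,0] i = 0 := by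
      intro i hi
      fin_cases i
      exacts [h10, hv11, hv12, hv1c.1, hv1c.2, absurd rfl hi]
    have h1' := (hC5 _ hx).1
    simp at h1'
  -- Step 6: conclusion
  refine ⟨φ ![(1:F),0,0,0,0,0] 0, ?_, ?_⟩
  all_goals {
    rw [h10, h20] at E4
    have hct : c = (φ ![(1:F),0,0,0,0,0] 0)^2
        * (φ ![0,(1:F),0,0,0,0] 1 * φ ![0,0,(1:F),0,0,0] 2
          - φ ![0,(1:F),0,0,0,0] 2 * φ ![0,0,(1:F),0,0,0] 1) := by
      linear_combination E4
    have ht : (φ ![0,(1:F),0,0,0,0] 1 * φ ![0,0,(1:F),0,0,0] 2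
        - φ ![0,(1:F),0,0,0,0] 2 * φ ![0,0,(1:F),0,0,0] 1) ≠ 0 := by
      intro h
      rw [h, mul_zero] at hct
      exact hc hct
    have hl : φ ![(1:F),0,0,0,0,0] 0 ≠ 0 := by
      intro h
      rw [h] at hct
      rw [show (0:F)^2 = 0 by ring, zero_mul] at hct
      exact hc hct
    first
      | exact hl
      | exact mul_right_cancel₀ ht (by linear_combination -E3 + α * hct)
  }
end aux

/-- For `α, β ∈ F*`, the algebras `B_{6,1}^α` and `B_{6,1}^β` are isomorphic if and only
if there exists `λ ∈ F*` with `β = λ²α`. -/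
theorem stmt_13 {F : Type*} [Field F] (h2 : (2 : F) ≠ 0)
    (α β : F) (hα : α ≠ 0) (hβ : β ≠ 0) :
    (∃ φ : (Fin 6 → F) ≃ₗ[F] (Fin 6 → F),
        ∀ x y : Fin 6 → F, φ (b61 α x y) = b61 β (φ x) (φ y)) ↔
    (∃ l : F, l ≠ 0 ∧ β = l ^ 2 * α) := by
  constructor
  · rintro ⟨φ, hφ⟩
    exact hard_dir α β hα hβ φ hφ
  · rintro ⟨l, hl, hβl⟩
    exact easy_dir α β l hl hβl
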